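/- For every L ∈ 𝐋, the linear space 𝒱(L) coincides with the cone generated by 𝐕(L): 𝒱(L) = {λV : λ ≥ 0, V ∈ 𝐕(L)}. -/

import Mathlib

open Matrix Filter Topology

/-- Square matrices of size `dT × dT`, indexed by blocks: index `(t, i)` is
row/column `i` within block `t`. -/
abbrev Mat (d T : ℕ) := Matrix (Fin T × Fin d) (Fin T × Fin d) ℝ

/-- The `t`-th diagonal `d × d` block of a `dT × dT` matrix. -/
def blk {d T : ℕ} (A : Mat d T) (t : Fin T) : Matrix (Fin d) (Fin d) ℝ :=
  fun i j => A (t, i) (t, j)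

/-- The `t`-th block column of a `dT × dT` matrix, a `dT × d` matrix. -/
def colBlk {d T : ℕ} (A : Mat d T) (t : Fin T) : Matrix (Fin T × Fin d) (Fin d) ℝ :=
  fun p j => A p (t, j)

/-- Membership in `𝐋`: block lower triangular matrices. -/
def memL {d T : ℕ} (A : Mat d T) : Prop :=
  ∀ (t s : Fin T) (i j : Fin d), t < s → A (t, i) (s, j) = 0

/-- Membership in `𝐎`: block diagonal matrices with orthogonal `d × d` diagonal blocks
(equivalently: block diagonal and orthogonal). -/
def memO {d T : ℕ} (O : Mat d T) : Prop :=
  (∀ (t s : Fin T) (i j : Fin d), t ≠ s → O (t, i) (s, j) = 0) ∧ Oᵀ * O = 1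

/-- The Frobenius norm of a real matrix. -/
noncomputable def frobNorm {m n : Type*} [Fintype m] [Fintype n] (A : Matrix m n ℝ) : ℝ :=
  Real.sqrt (∑ i, ∑ j, (A i j) ^ 2)

/-- The Frobenius inner product of two real matrices. -/
noncomputable def frobInner {m n : Type*} [Fintype m] [Fintype n] (A B : Matrix m n ℝ) : ℝ :=
  ∑ i, ∑ j, A i j * B i j

/-- The adapted Bures–Wasserstein distance `d_ABW(L, M) = inf_{O ∈ 𝐎} ‖L - M O‖_F`. -/
noncomputable def dABW {d T : ℕ} (L M : Mat d T) : ℝ :=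
  sInf {r : ℝ | ∃ O : Mat d T, memO O ∧ r = frobNorm (L - M * O)}

/-- The set `𝐎*(L, M)` of optimizers of `inf_{O ∈ 𝐎} ‖L - M O‖_F`. -/
noncomputable def OStar {d T : ℕ} (L M : Mat d T) : Set (Mat d T) :=
  {O | memO O ∧ frobNorm (L - M * O) = dABW L M}

/-- The set `𝐕(L) = {M P - L : M ∈ 𝐋, P ∈ 𝐎*(L, M)}`. -/
noncomputable def VSet {d T : ℕ} (L : Mat d T) : Set (Mat d T) :=
  {V | ∃ M P : Mat d T, memL M ∧ P ∈ OStar L M ∧ V = M * P - L}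

/-- The set `𝒱(L) = {V ∈ 𝐋 : (Vᵀ L)_{t,t} is symmetric for all t}`. -/
def calV {d T : ℕ} (L : Mat d T) : Set (Mat d T) :=
  {V | memL V ∧ ∀ t : Fin T, (blk (Vᵀ * L) t).IsSymm}

/-- The set `𝐋^reg = {L ∈ 𝐋 : (Lᵀ L)_{t,t} is positive definite for all t}`. -/
def LReg {d T : ℕ} : Set (Mat d T) :=
  {L | memL L ∧ ∀ t : Fin T, (blk (Lᵀ * L) t).PosDef}

/-- The sum of the singular values of a real square matrix `A`,
i.e. the trace of the positive semidefinite square root of `Aᵀ A`. -/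
noncomputable def svSum {n : ℕ} (A : Matrix (Fin n) (Fin n) ℝ) : ℝ :=
  ((Matrix.posSemidef_conjTranspose_mul_self A).isHermitian.eigenvectorUnitary.1 *
    diagonal ((RCLike.ofReal (K := ℝ)) ∘ Real.sqrt ∘
      (Matrix.posSemidef_conjTranspose_mul_self A).isHermitian.eigenvalues) *
    (star (Matrix.posSemidef_conjTranspose_mul_self A).isHermitian.eigenvectorUnitary :
      Matrix (Fin n) (Fin n) ℝ)).trace

/-- The operator norm of a real matrix: the supremum of the euclidean norm `‖A x‖₂`
over the euclidean unit ball. -/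
noncomputable def opNorm {m n : Type*} [Fintype m] [Fintype n] (A : Matrix m n ℝ) : ℝ :=
  sSup {r : ℝ | ∃ x : n → ℝ, (∑ j, (x j) ^ 2) ≤ 1 ∧ r = Real.sqrt (∑ i, (A.mulVec x i) ^ 2)}

/-!
Minimising `‖L - M O‖_F` over `O ∈ 𝐎` is the same as maximising `tr (Lᵀ M O)`. If `P` is
optimal, composing it with a Givens rotation in two coordinates of the `t`-th block cannot raise
this trace, which forces `(Lᵀ M P)_{t,t}` to be symmetric; this gives `𝐕(L) ⊆ 𝒱(L)`.
Conversely, let `W ∈ 𝒱(L)` and write `Lₜ`, `Wₜ` for the `t`-th block columns. The symmetric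
matrix `Lₜᵀ Wₜ` vanishes on `ker Lₜ`, hence factors as `Lₜᵀ N Lₜ`, so
`(Lᵀ (L + ε W))_{t,t} = Lₜᵀ (1 + ε N) Lₜ` is positive semidefinite for small `ε > 0`. Since
`tr (B Q) ≤ tr B` for positive semidefinite `B` and orthogonal `Q`, the identity is then optimal
for `M = L + ε W`, and `ε W = M · 1 - L ∈ 𝐕(L)`.
-/

section Trace

variable {m n : Type*} [Fintype m] [Fintype n]

lemma sum_sq_eq_trace_transpose_mul_self (A : Matrix m n ℝ) :
    ∑ i, ∑ j, A i j ^ 2 = (Aᵀ * A).trace := by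
  simp only [trace, diag, mul_apply, transpose_apply, sq]
  exact Finset.sum_comm

variable [DecidableEq n]

lemma trace_transpose_mul_self_sub_mul (L M : Matrix m n ℝ) {Q : Matrix n n ℝ}
    (hQ : Qᵀ * Q = 1) :
    ((L - M * Q)ᵀ * (L - M * Q)).trace =
      (Lᵀ * L).trace - 2 * (Lᵀ * (M * Q)).trace + (Mᵀ * M).trace := by
  have hcross : ((M * Q)ᵀ * L).trace = (Lᵀ * (M * Q)).trace := by
    rw [← trace_transpose, transpose_mul, transpose_transpose]
  have hsq : ((M * Q)ᵀ * (M * Q)).trace = (Mᵀ * M).trace := by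
    rw [transpose_mul, Matrix.mul_assoc, trace_mul_comm, ← Matrix.mul_assoc,
      Matrix.mul_assoc (Mᵀ * M) Q, mul_eq_one_comm.mp hQ, Matrix.mul_one]
  rw [transpose_sub, Matrix.sub_mul, Matrix.mul_sub, Matrix.mul_sub, trace_sub, trace_sub,
    trace_sub, hcross, hsq]
  ring

lemma trace_mul_le_trace_of_posSemidef {B Q : Matrix n n ℝ} (hB : B.PosSemidef)
    (hQ : Qᵀ * Q = 1) : (B * Q).trace ≤ B.trace := by
  -- writing `B = Cᵀ C`, the defect `tr B - tr (B Q)` is `‖C - C Q‖_F² / 2`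
  obtain ⟨C, rfl⟩ : ∃ C : Matrix n n ℝ, B = star C * C := by
    open scoped MatrixOrder in exact CStarAlgebra.nonneg_iff_eq_star_mul_self.mp hB.nonneg
  have h := (posSemidef_conjTranspose_mul_self (C - C * Q)).trace_nonneg
  rw [star_eq_conjTranspose, conjTranspose_eq_transpose_of_trivial] at *
  rw [trace_transpose_mul_self_sub_mul C C hQ, ← Matrix.mul_assoc] at h
  linarith

end Trace

section Givens

variable {n : Type*} [Fintype n] [DecidableEq n]

def givens (p q : n) (c s : ℝ) : Matrix n n ℝ :=
  1 + (c - 1) • (single p p 1 + single q q 1) + s • (single q p 1 - single p q 1)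

lemma givens_transpose_mul_self {p q : n} (hpq : p ≠ q) {c s : ℝ} (h : c ^ 2 + s ^ 2 = 1) :
    (givens p q c s)ᵀ * givens p q c s = 1 := by
  simp only [givens, smul_add, smul_single, smul_eq_mul, mul_one, transpose_add, transpose_one,
    transpose_single, transpose_smul, transpose_sub, Matrix.mul_add, Matrix.add_mul, one_mul,
    single_mul_single_same, ne_eq, hpq, hpq.symm, not_false_eq_true, single_mul_single_of_ne,
    add_zero, zero_add, sub_zero, zero_sub, smul_neg, Algebra.smul_mul_assoc,
    Algebra.mul_smul_comm, Matrix.sub_mul, Matrix.mul_sub]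
  ext a b
  simp only [Matrix.add_apply, one_apply, single_apply, Matrix.smul_apply, Matrix.sub_apply,
    smul_eq_mul, Matrix.neg_apply]
  split_ifs <;> simp_all <;> nlinarith

lemma trace_mul_givens (B : Matrix n n ℝ) (p q : n) (c s : ℝ) :
    (B * givens p q c s).trace =
      B.trace + (c - 1) * (B p p + B q q) + s * (B p q - B q p) := by
  simp only [givens, Matrix.mul_add, Matrix.mul_sub, Matrix.mul_smul, Matrix.mul_one, trace_add,
    trace_sub, trace_smul, trace_mul_single, MulOpposite.op_one, one_smul, smul_eq_mul]

lemma exists_sq_add_sq_eq_one_and_pos {a b : ℝ} (hb : b ≠ 0) :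
    ∃ c s : ℝ, c ^ 2 + s ^ 2 = 1 ∧ 0 < (c - 1) * a + s * b := by
  set r := √(a ^ 2 + b ^ 2)
  have hr2 : r ^ 2 = a ^ 2 + b ^ 2 := Real.sq_sqrt (by positivity)
  have hr : 0 < r := Real.sqrt_pos.mpr (by positivity)
  refine ⟨a / r, b / r, ?_, ?_⟩
  · rw [div_pow, div_pow, ← add_div, ← hr2, div_self (by positivity)]
  · have hgain : (a / r - 1) * a + b / r * b = r - a := by
      field_simp
      linear_combination -hr2
    rw [hgain]
    nlinarith [sq_pos_of_ne_zero hb]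

lemma apply_eq_of_trace_mul_givens_le {B : Matrix n n ℝ} {p q : n}
    (h : ∀ c s : ℝ, c ^ 2 + s ^ 2 = 1 → (B * givens p q c s).trace ≤ B.trace) :
    B p q = B q p := by
  by_contra hB
  obtain ⟨c, s, hcs, hgain⟩ :=
    exists_sq_add_sq_eq_one_and_pos (a := B p p + B q q) (sub_ne_zero.mpr hB)
  have := h c s hcs
  rw [trace_mul_givens] at this
  linarith

end Givens

lemma Matrix.exists_mul_mul_eq_self {K m n : Type*} [Field K] [Fintype m] [Fintype n]
    [DecidableEq m] [DecidableEq n] (A : Matrix m n K) : ∃ R : Matrix n m K, A * R * A = A := by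
  obtain ⟨g, hg⟩ := (toLin' A).rangeRestrict.exists_rightInverse_of_surjective
    (toLin' A).range_rangeRestrict
  obtain ⟨h, hh⟩ := (toLin' A).range.subtype.exists_leftInverse_of_injective
    (toLin' A).range.ker_subtype
  refine ⟨LinearMap.toMatrix' (g ∘ₗ h), toLin'.injective (LinearMap.ext fun x => ?_)⟩
  have hfx : h (toLin' A x) = (toLin' A).rangeRestrict x := by
    simpa using LinearMap.congr_fun hh ((toLin' A).rangeRestrict x)
  have := congrArg Subtype.val (LinearMap.congr_fun hg ((toLin' A).rangeRestrict x))
  simp only [toLin'_mul, LinearMap.comp_apply, toLin'_toMatrix', hfx]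
  simpa using this

lemma abs_dotProduct_mulVec_le {n : Type*} [Fintype n] (N : Matrix n n ℝ) (v : n → ℝ) :
    |v ⬝ᵥ (N *ᵥ v)| ≤ (∑ i, ∑ j, |N i j|) * (v ⬝ᵥ v) := by
  have hcoord : ∀ i, v i * v i ≤ v ⬝ᵥ v := fun i =>
    Finset.single_le_sum (f := fun k => v k * v k) (fun k _ => mul_self_nonneg _)
      (Finset.mem_univ i)
  have hprod : ∀ i j, |v i * v j| ≤ v ⬝ᵥ v := fun i j => by
    rw [abs_mul]
    nlinarith [sq_nonneg (|v i| - |v j|), abs_mul_abs_self (v i), abs_mul_abs_self (v j),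
      hcoord i, hcoord j]
  calc |v ⬝ᵥ (N *ᵥ v)| = |∑ i, ∑ j, N i j * (v i * v j)| := by
        simp only [dotProduct, mulVec, Finset.mul_sum]
        congr 1; refine Finset.sum_congr rfl fun i _ => Finset.sum_congr rfl fun j _ => by ring
    _ ≤ ∑ i, ∑ j, |N i j| * |v i * v j| := by
        refine (Finset.abs_sum_le_sum_abs _ _).trans (Finset.sum_le_sum fun i _ => ?_)
        refine (Finset.abs_sum_le_sum_abs _ _).trans_eq ?_
        simp only [abs_mul]
    _ ≤ ∑ i, ∑ j, |N i j| * (v ⬝ᵥ v) := by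
        gcongr with i _ j _
        exact hprod i j
    _ = (∑ i, ∑ j, |N i j|) * (v ⬝ᵥ v) := by simp only [Finset.sum_mul]

lemma eventually_posSemidef_one_add_smul {n : Type*} [Fintype n] [DecidableEq n]
    {N : Matrix n n ℝ} (hN : N.IsSymm) : ∀ᶠ ε in 𝓝 (0 : ℝ), (1 + ε • N).PosSemidef := by
  set C := ∑ i, ∑ j, |N i j|
  have hsmall : ∀ᶠ ε in 𝓝 (0 : ℝ), |ε| * C ≤ 1 := by
    have hcont : Continuous fun ε : ℝ => |ε| * C := by fun_prop
    exact (hcont.tendsto' 0 0 (by simp)).eventually (eventually_le_nhds one_pos)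
  filter_upwards [hsmall] with ε hε
  refine .of_dotProduct_mulVec_nonneg ?_ fun v => ?_
  · rw [isHermitian_iff_isSymm]
    exact isSymm_one.add (hN.smul ε)
  · rw [star_trivial, add_mulVec, one_mulVec, smul_mulVec, dotProduct_add, dotProduct_smul,
      smul_eq_mul]
    have hperturb : |ε * (v ⬝ᵥ (N *ᵥ v))| ≤ v ⬝ᵥ v := by
      rw [abs_mul]
      calc |ε| * |v ⬝ᵥ (N *ᵥ v)| ≤ |ε| * (C * (v ⬝ᵥ v)) :=
            mul_le_mul_of_nonneg_left (abs_dotProduct_mulVec_le N v) (abs_nonneg ε)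
        _ ≤ 1 * (v ⬝ᵥ v) := by
            rw [← mul_assoc]
            exact mul_le_mul_of_nonneg_right hε (Finset.sum_nonneg fun i _ => mul_self_nonneg _)
        _ = v ⬝ᵥ v := one_mul _
    linarith [neg_abs_le (ε * (v ⬝ᵥ (N *ᵥ v)))]

lemma eventually_posSemidef_transpose_mul_self_add_smul {m n : Type*} [Fintype m] [Fintype n]
    [DecidableEq m] [DecidableEq n] (A B : Matrix m n ℝ) (hS : (Aᵀ * B).IsSymm) :
    ∀ᶠ ε in 𝓝 (0 : ℝ), (Aᵀ * A + ε • (Aᵀ * B)).PosSemidef := by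
  obtain ⟨R, hR⟩ := A.exists_mul_mul_eq_self
  have hSRA : Aᵀ * B * R * A = Aᵀ * B := by
    rw [← hS.eq, transpose_mul, transpose_transpose, Matrix.mul_assoc, Matrix.mul_assoc,
      ← Matrix.mul_assoc A, hR]
  -- `Aᵀ B` is symmetric and vanishes on `ker A`, so it is a quadratic form in `A x`
  have hfactor : Aᵀ * B = Aᵀ * (Rᵀ * (Aᵀ * B) * R) * A := by
    calc Aᵀ * B = (Aᵀ * B * R * A)ᵀ * R * A := by rw [hSRA, hS.eq, hSRA]
      _ = Aᵀ * (Rᵀ * (Aᵀ * B) * R) * A := by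
        rw [transpose_mul, transpose_mul, hS.eq]; simp only [Matrix.mul_assoc]
  have hN : (Rᵀ * (Aᵀ * B) * R).IsSymm := by
    rw [IsSymm, transpose_mul, transpose_mul, hS.eq, transpose_transpose, Matrix.mul_assoc]
    simp only [Matrix.mul_assoc]
  filter_upwards [eventually_posSemidef_one_add_smul hN] with ε hε
  have := hε.conjTranspose_mul_mul_same A
  rwa [conjTranspose_eq_transpose_of_trivial, Matrix.mul_add, Matrix.add_mul, Matrix.mul_one,
    Matrix.mul_smul, Matrix.smul_mul, ← hfactor] at this

section Blocks

variable {d T : ℕ}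

def IsBlockDiag (A : Mat d T) : Prop :=
  ∀ (t s : Fin T) (i j : Fin d), t ≠ s → A (t, i) (s, j) = 0

lemma IsBlockDiag.mul {A B : Mat d T} (hA : IsBlockDiag A) (hB : IsBlockDiag B) :
    IsBlockDiag (A * B) := by
  intro t s i j hts
  rw [mul_apply]
  refine Finset.sum_eq_zero fun ⟨u, k⟩ _ => ?_
  by_cases hu : t = u
  · rw [hB u s k j (hu ▸ hts), mul_zero]
  · rw [hA t u i k hu, zero_mul]

lemma memL.add {A B : Mat d T} (hA : memL A) (hB : memL B) : memL (A + B) := by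
  intro t s i j h; simp [hA t s i j h, hB t s i j h]

lemma memL.sub {A B : Mat d T} (hA : memL A) (hB : memL B) : memL (A - B) := by
  intro t s i j h; simp [hA t s i j h, hB t s i j h]

lemma memL.smul {A : Mat d T} (hA : memL A) (c : ℝ) : memL (c • A) := by
  intro t s i j h; simp [hA t s i j h]

lemma memL.mul_isBlockDiag {A B : Mat d T} (hA : memL A) (hB : IsBlockDiag B) :
    memL (A * B) := by
  intro t s i j hts
  rw [mul_apply]
  refine Finset.sum_eq_zero fun ⟨u, k⟩ _ => ?_
  by_cases hu : u = s
  · rw [hA t u i k (hu ▸ hts), zero_mul]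
  · rw [hB u s k j hu, mul_zero]

lemma blk_add (A B : Mat d T) (t : Fin T) : blk (A + B) t = blk A t + blk B t := rfl

lemma blk_sub (A B : Mat d T) (t : Fin T) : blk (A - B) t = blk A t - blk B t := rfl

lemma blk_smul (c : ℝ) (A : Mat d T) (t : Fin T) : blk (c • A) t = c • blk A t := rfl

lemma blk_transpose (A : Mat d T) (t : Fin T) : blk Aᵀ t = (blk A t)ᵀ := rfl

lemma blk_transpose_mul_eq_transpose (A B : Mat d T) (t : Fin T) :
    blk (Aᵀ * B) t = (blk (Bᵀ * A) t)ᵀ := by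
  rw [← blk_transpose, transpose_mul, transpose_transpose]

lemma blk_one (t : Fin T) : blk (1 : Mat d T) t = 1 := by
  ext i j; simp [blk, one_apply]

lemma blk_transpose_mul (A B : Mat d T) (t : Fin T) :
    blk (Aᵀ * B) t = (colBlk A t)ᵀ * colBlk B t := rfl

lemma blk_mul_of_isBlockDiag (A : Mat d T) {B : Mat d T} (hB : IsBlockDiag B) (t : Fin T) :
    blk (A * B) t = blk A t * blk B t := by
  ext i j
  simp only [blk, mul_apply, Fintype.sum_prod_type]
  refine Finset.sum_eq_single t (fun s _ hs => Finset.sum_eq_zero fun k _ => ?_) (by simp)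
  rw [hB s t k j hs, mul_zero]

lemma trace_eq_sum_trace_blk (A : Mat d T) : A.trace = ∑ t, (blk A t).trace := by
  rw [trace, Fintype.sum_prod_type]; rfl

lemma blk_transpose_mul_self_of_memO {O : Mat d T} (hO : memO O) (t : Fin T) :
    (blk O t)ᵀ * blk O t = 1 := by
  rw [← blk_transpose, ← blk_mul_of_isBlockDiag _ hO.1, hO.2, blk_one]

lemma trace_mul_le_trace_of_posSemidef_blk {S O : Mat d T} (hS : ∀ t, (blk S t).PosSemidef)
    (hO : memO O) : (S * O).trace ≤ S.trace := by
  rw [trace_eq_sum_trace_blk, trace_eq_sum_trace_blk S]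
  refine Finset.sum_le_sum fun t _ => ?_
  rw [blk_mul_of_isBlockDiag _ hO.1]
  exact trace_mul_le_trace_of_posSemidef (hS t) (blk_transpose_mul_self_of_memO hO t)

lemma memO_one : memO (1 : Mat d T) :=
  ⟨fun _ _ _ _ hts => one_apply_ne (by simp [hts]), by simp⟩

lemma memO.mul_givens {P : Mat d T} (hP : memO P) (t : Fin T) {i j : Fin d} (hij : i ≠ j)
    {c s : ℝ} (hcs : c ^ 2 + s ^ 2 = 1) : memO (P * givens (t, i) (t, j) c s) := by
  have hG : IsBlockDiag (givens (t, i) (t, j) c s) := fun u v k l huv => by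
    rcases eq_or_ne t u with rfl | htu
    · simp [givens, one_apply, huv]
    · simp [givens, one_apply, huv, htu]
  refine ⟨IsBlockDiag.mul hP.1 hG, ?_⟩
  rw [transpose_mul, Matrix.mul_assoc, ← Matrix.mul_assoc Pᵀ, hP.2, Matrix.one_mul,
    givens_transpose_mul_self (by simpa using hij) hcs]

end Blocks

section Optimality

variable {d T : ℕ}

lemma frobNorm_sub_mul_le_iff {L M O₁ O₂ : Mat d T} (hO₁ : memO O₁) (hO₂ : memO O₂) :
    frobNorm (L - M * O₁) ≤ frobNorm (L - M * O₂) ↔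
      (Lᵀ * (M * O₂)).trace ≤ (Lᵀ * (M * O₁)).trace := by
  rw [frobNorm, frobNorm, Real.sqrt_le_sqrt_iff (by positivity),
    sum_sq_eq_trace_transpose_mul_self, sum_sq_eq_trace_transpose_mul_self,
    trace_transpose_mul_self_sub_mul L M hO₁.2, trace_transpose_mul_self_sub_mul L M hO₂.2]
  constructor <;> intro h <;> linarith

lemma mem_OStar_iff {L M O : Mat d T} :
    O ∈ OStar L M ↔ memO O ∧ ∀ O', memO O' → (Lᵀ * (M * O')).trace ≤ (Lᵀ * (M * O)).trace := by
  constructor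
  · rintro ⟨hO, hmin⟩
    refine ⟨hO, fun O' hO' => (frobNorm_sub_mul_le_iff hO hO').mp ?_⟩
    rw [hmin]
    exact csInf_le ⟨0, by rintro _ ⟨_, _, rfl⟩; exact Real.sqrt_nonneg _⟩ ⟨O', hO', rfl⟩
  · rintro ⟨hO, hmax⟩
    refine ⟨hO, (IsLeast.csInf_eq ?_).symm⟩
    refine ⟨⟨O, hO, rfl⟩, ?_⟩
    rintro _ ⟨O', hO', rfl⟩
    exact (frobNorm_sub_mul_le_iff hO hO').mpr (hmax O' hO')

lemma one_mem_OStar_of_posSemidef_blk {L M : Mat d T}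
    (h : ∀ t, (blk (Lᵀ * M) t).PosSemidef) : (1 : Mat d T) ∈ OStar L M := by
  refine mem_OStar_iff.mpr ⟨memO_one, fun O hO => ?_⟩
  rw [Matrix.mul_one, ← Matrix.mul_assoc]
  exact trace_mul_le_trace_of_posSemidef_blk h hO

lemma isSymm_blk_of_mem_OStar {L M P : Mat d T} (hP : P ∈ OStar L M) (t : Fin T) :
    (blk (Lᵀ * (M * P)) t).IsSymm := by
  obtain ⟨hPO, hopt⟩ := mem_OStar_iff.mp hP
  refine IsSymm.ext fun i j => ?_
  rcases eq_or_ne i j with rfl | hij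
  · rfl
  refine (apply_eq_of_trace_mul_givens_le (B := Lᵀ * (M * P)) (p := (t, i)) (q := (t, j))
    fun c s hcs => ?_).symm
  simpa only [Matrix.mul_assoc] using hopt _ (hPO.mul_givens t hij hcs)

end Optimality

section Cone

variable {d T : ℕ}

lemma smul_mem_calV {L V : Mat d T} (hV : V ∈ calV L) (c : ℝ) : c • V ∈ calV L := by
  refine ⟨hV.1.smul c, fun t => ?_⟩
  rw [transpose_smul, Matrix.smul_mul, blk_smul]
  exact (hV.2 t).smul c

lemma VSet_subset_calV {L : Mat d T} (hL : memL L) : VSet L ⊆ calV L := by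
  rintro _ ⟨M, P, hM, hP, rfl⟩
  refine ⟨(hM.mul_isBlockDiag hP.1.1).sub hL, fun t => ?_⟩
  rw [transpose_sub, Matrix.sub_mul, blk_sub]
  refine IsSymm.sub ?_ ?_
  · rw [blk_transpose_mul_eq_transpose]
    exact (isSymm_blk_of_mem_OStar hP t).transpose
  · exact (blk_transpose_mul_eq_transpose L L t).symm

lemma exists_pos_smul_mem_VSet {L W : Mat d T} (hL : memL L) (hW : W ∈ calV L) :
    ∃ ε : ℝ, 0 < ε ∧ ε • W ∈ VSet L := by
  have hblk : ∀ t, ∀ᶠ ε in 𝓝 (0 : ℝ), (blk (Lᵀ * (L + ε • W)) t).PosSemidef := by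
    intro t
    have hsymm : ((colBlk L t)ᵀ * colBlk W t).IsSymm := by
      rw [← blk_transpose_mul, blk_transpose_mul_eq_transpose]
      exact (hW.2 t).transpose
    simpa only [Matrix.mul_add, Matrix.mul_smul, blk_add, blk_smul, blk_transpose_mul] using
      eventually_posSemidef_transpose_mul_self_add_smul _ _ hsymm
  have hblk' : ∀ᶠ ε in 𝓝[>] (0 : ℝ), ∀ t, (blk (Lᵀ * (L + ε • W)) t).PosSemidef :=
    nhdsWithin_le_nhds (eventually_all.mpr hblk)
  obtain ⟨ε, hpos, hε⟩ := (hblk'.and self_mem_nhdsWithin).exists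
  refine ⟨ε, hε, L + ε • W, 1, hL.add (hW.1.smul ε), one_mem_OStar_of_posSemidef_blk hpos, ?_⟩
  rw [Matrix.mul_one, add_sub_cancel_left]

end Cone

theorem stmt15_general (d T : ℕ) (L : Mat d T) (hL : memL L) :
    calV L = {W : Mat d T | ∃ lam : ℝ, 0 ≤ lam ∧ ∃ V ∈ VSet L, W = lam • V} := by
  ext W
  constructor
  · intro hW
    obtain ⟨ε, hε, hεW⟩ := exists_pos_smul_mem_VSet hL hW
    refine ⟨ε⁻¹, inv_nonneg.mpr hε.le, ε • W, hεW, ?_⟩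
    rw [smul_smul, inv_mul_cancel₀ hε.ne', one_smul]
  · rintro ⟨lam, -, V, hV, rfl⟩
    exact smul_mem_calV (VSet_subset_calV hL hV) lam

/-- the linear space `𝒱(L)` is the cone generated by `𝐕(L)`. -/
theorem stmt15 (d T : ℕ) (hd : 0 < d) (hT : 0 < T) (L : Mat d T) (hL : memL L) :
    calV L = {W : Mat d T | ∃ lam : ℝ, 0 ≤ lam ∧ ∃ V ∈ VSet L, W = lam • V} :=
  stmt15_general d T L hL
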